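/- arXiv:1202.0136 — 7 statements merged into one kernel-verified Lean document; each statement's English description precedes it below -/
import Mathlib

section
/- Fix a real number D > 1, let Σ be a finite nonempty set, μ a positive probability vector on Σ, R ∈ (0,2), and set α := R/2. Suppose 0 < w̲ ≤ w̄ are a lower water level and an upper water level for μ and α, respectively, and let ν† be the clipped distribution. Then the lengths l†(x) := −log_D ν†(x) satisfy l†(x) ≥ 0 for all x, ∑_{x∈Σ} D^{−l†(x)} = 1, and for every length function l : Σ → ℝ with l(x) ≥ 0 for all x and ∑_{x∈Σ} D^{−l(x)} ≤ 1, one has (R/2)(max_{x∈Σ} l†(x) − min_{x∈Σ} l†(x)) + ∑_{x∈Σ} l†(x)μ(x) ≤ (R/2)(max_{x∈Σ} l(x) − min_{x∈Σ} l(x)) + ∑_{x∈Σ} l(x)μ(x). -/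
/-!
Write `a = (w̲ - μ)⁺` and `b = (μ - w̄)⁺`, so that `ν† = μ + a - b` with `∑ a = ∑ b = R/2`.
For any lengths `l`, `∑ l ν† = ∑ l μ + ∑ l a - ∑ l b ≤ ∑ l μ + (R/2)(max l - min l)`, since
`a, b ≥ 0`. For `l†` this is an equality: `a` lives where `ν† = w̲`, i.e. where `l†` is
maximal, and `b` where `ν† = w̄`, i.e. where `l†` is minimal. Gibbs' inequality
`∑ l† ν† ≤ ∑ l ν†` for Kraft lengths `l` links the two.
-/

open Finset

namespace Finset

variable {ι : Type*} {s : Finset ι} {f w : ι → ℝ} {c : ℝ}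

theorem sum_mul_le_mul_sum_of_le (hw : ∀ i ∈ s, 0 ≤ w i) (hf : ∀ i ∈ s, w i ≠ 0 → f i ≤ c) :
    ∑ i ∈ s, f i * w i ≤ c * ∑ i ∈ s, w i := by
  rw [mul_sum]
  refine sum_le_sum fun i hi => ?_
  rcases eq_or_ne (w i) 0 with h | h
  · simp [h]
  · exact mul_le_mul_of_nonneg_right (hf i hi h) (hw i hi)

theorem mul_sum_le_sum_mul_of_le (hw : ∀ i ∈ s, 0 ≤ w i) (hf : ∀ i ∈ s, w i ≠ 0 → c ≤ f i) :
    c * ∑ i ∈ s, w i ≤ ∑ i ∈ s, f i * w i := by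
  rw [mul_sum]
  refine sum_le_sum fun i hi => ?_
  rcases eq_or_ne (w i) 0 with h | h
  · simp [h]
  · exact mul_le_mul_of_nonneg_right (hf i hi h) (hw i hi)

end Finset

namespace Real

variable {ι : Type*} {s : Finset ι} {p q : ι → ℝ}

theorem sum_mul_log_le_sum_mul_log (hp : ∀ i ∈ s, 0 < p i) (hq : ∀ i ∈ s, 0 < q i)
    (hsum : ∑ i ∈ s, q i ≤ ∑ i ∈ s, p i) :
    ∑ i ∈ s, p i * log (q i) ≤ ∑ i ∈ s, p i * log (p i) := by
  have hpoint : ∀ i ∈ s, p i * log (q i) - p i * log (p i) ≤ q i - p i := fun i hi => by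
    have hlog := log_le_sub_one_of_pos (div_pos (hq i hi) (hp i hi))
    rw [log_div (hq i hi).ne' (hp i hi).ne'] at hlog
    calc p i * log (q i) - p i * log (p i) = p i * (log (q i) - log (p i)) := by ring
      _ ≤ p i * (q i / p i - 1) := mul_le_mul_of_nonneg_left hlog (hp i hi).le
      _ = q i - p i := by field_simp [(hp i hi).ne']
  have := sum_le_sum hpoint
  rw [sum_sub_distrib, sum_sub_distrib] at this
  linarith

theorem sum_neg_logb_mul_le_sum_mul {D : ℝ} (hD : 1 < D) {l : ι → ℝ} (hp : ∀ i ∈ s, 0 < p i)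
    (hkraft : ∑ i ∈ s, D ^ (-l i) ≤ ∑ i ∈ s, p i) :
    ∑ i ∈ s, -logb D (p i) * p i ≤ ∑ i ∈ s, l i * p i := by
  have hlogD : 0 < log D := log_pos hD
  have hgibbs := sum_mul_log_le_sum_mul_log hp (fun i _ => rpow_pos_of_pos (by linarith) _) hkraft
  simp only [log_rpow (by linarith : 0 < D)] at hgibbs
  have hlhs : ∑ i ∈ s, -logb D (p i) * p i = -(∑ i ∈ s, p i * log (p i)) / log D := by
    rw [neg_div, sum_div, ← sum_neg_distrib]
    exact sum_congr rfl fun i _ => by rw [logb]; ring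
  have hrhs : ∑ i ∈ s, l i * p i = -(∑ i ∈ s, p i * (-l i * log D)) / log D := by
    rw [neg_div, sum_div, ← sum_neg_distrib]
    exact sum_congr rfl fun i _ => by field_simp
  rw [hlhs, hrhs]
  exact div_le_div_of_nonneg_right (neg_le_neg hgibbs) hlogD.le

end Real

section Clipping

variable {ι : Type*} [Fintype ι] {μ : ι → ℝ} {lo hi a : ℝ}

theorem min_max_mem_Icc (h : lo ≤ hi) (t : ℝ) : min hi (max lo t) ∈ Set.Icc lo hi :=
  ⟨le_min h (le_max_left _ _), min_le_left _ _⟩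

theorem min_max_eq_add_sub (h : lo ≤ hi) (t : ℝ) :
    min hi (max lo t) = t + max (lo - t) 0 - max (t - hi) 0 := by
  simp only [max_def, min_def]
  split_ifs <;> linarith

theorem sum_mul_min_max (h : lo ≤ hi) (f : ι → ℝ) :
    ∑ x, f x * min hi (max lo (μ x)) =
      ∑ x, f x * μ x + ∑ x, f x * max (lo - μ x) 0 - ∑ x, f x * max (μ x - hi) 0 := by
  rw [← sum_add_distrib, ← sum_sub_distrib]
  exact sum_congr rfl fun x _ => by rw [min_max_eq_add_sub h]; ring

theorem sum_min_max (h : lo ≤ hi) (hlow : ∑ x, max (lo - μ x) 0 = a)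
    (hup : ∑ x, max (μ x - hi) 0 = a) :
    ∑ x, min hi (max lo (μ x)) = ∑ x, μ x := by
  simpa [hlow, hup] using sum_mul_min_max (μ := μ) h 1

variable [Nonempty ι]

theorem sum_mul_min_max_le (h : lo ≤ hi) (hlow : ∑ x, max (lo - μ x) 0 = a)
    (hup : ∑ x, max (μ x - hi) 0 = a) (f : ι → ℝ) :
    ∑ x, f x * min hi (max lo (μ x)) ≤
      a * (univ.sup' univ_nonempty f - univ.inf' univ_nonempty f) + ∑ x, f x * μ x := by
  have hlo := sum_mul_le_mul_sum_of_le (s := univ) (f := f) (c := univ.sup' univ_nonempty f)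
    (fun x _ => le_max_right (lo - μ x) 0) fun x hx _ => le_sup' f hx
  have hhi := mul_sum_le_sum_mul_of_le (s := univ) (f := f) (c := univ.inf' univ_nonempty f)
    (fun x _ => le_max_right (μ x - hi) 0) fun x hx _ => inf'_le f hx
  rw [sum_mul_min_max h]
  rw [hlow] at hlo
  rw [hup] at hhi
  linarith

/-- The reverse of `sum_mul_min_max_le`: a decreasing function of the clipped values is maximal
where `μ < lo` and minimal where `μ > hi`. -/
theorem le_sum_mul_min_max (h : lo ≤ hi) (hlow : ∑ x, max (lo - μ x) 0 = a)
    (hup : ∑ x, max (μ x - hi) 0 = a) {g : ℝ → ℝ} (hg : AntitoneOn g (Set.Icc lo hi))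
    {f : ι → ℝ} (hf : ∀ x, f x = g (min hi (max lo (μ x)))) :
    a * (univ.sup' univ_nonempty f - univ.inf' univ_nonempty f) + ∑ x, f x * μ x ≤
      ∑ x, f x * min hi (max lo (μ x)) := by
  have hmem := min_max_mem_Icc h
  have hlo := mul_sum_le_sum_mul_of_le (s := univ) (f := f) (c := univ.sup' univ_nonempty f)
    (fun x _ => le_max_right (lo - μ x) 0) fun x _ hx => by
      have hμx : μ x < lo := by by_contra! hμx; exact hx (max_eq_right (by linarith))
      rw [hf x, max_eq_left hμx.le, min_eq_right h]
      exact sup'_le _ _ fun y _ => hf y ▸ hg ⟨le_rfl, h⟩ (hmem _) (hmem _).1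
  have hhi := sum_mul_le_mul_sum_of_le (s := univ) (f := f) (c := univ.inf' univ_nonempty f)
    (fun x _ => le_max_right (μ x - hi) 0) fun x _ hx => by
      have hμx : hi < μ x := by by_contra! hμx; exact hx (max_eq_right (by linarith))
      rw [hf x, max_eq_right (h.trans hμx.le), min_eq_left hμx.le]
      exact le_inf' _ _ fun y _ => hf y ▸ hg (hmem _) ⟨h, le_rfl⟩ (hmem _).2
  rw [sum_mul_min_max h]
  rw [hlow] at hlo
  rw [hup] at hhi
  linarith

end Clipping

theorem stmt_1_general {α : Type*} [Fintype α] [Nonempty α]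
    (D : ℝ) (hD : 1 < D)
    (μ : α → ℝ) (hμ1 : ∑ x, μ x = 1)
    (R : ℝ)
    (wlo whi : ℝ) (hwlo : 0 < wlo) (hwle : wlo ≤ whi)
    (hlow : ∑ x, max (wlo - μ x) 0 = R / 2)
    (hup : ∑ x, max (μ x - whi) 0 = R / 2)
    (ν lopt : α → ℝ)
    (hν : ∀ x, ν x = min whi (max wlo (μ x)))
    (hlopt : ∀ x, lopt x = -(Real.log (ν x) / Real.log D)) :
    (∀ x, 0 ≤ lopt x) ∧
    (∑ x, D ^ (-(lopt x)) = 1) ∧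
    (∀ l : α → ℝ, (∀ x, 0 ≤ l x) → ∑ x, D ^ (-(l x)) ≤ 1 →
      R / 2 * (univ.sup' univ_nonempty lopt - univ.inf' univ_nonempty lopt) +
          ∑ x, lopt x * μ x ≤
        R / 2 * (univ.sup' univ_nonempty l - univ.inf' univ_nonempty l) +
          ∑ x, l x * μ x) := by
  have hνpos : ∀ x, 0 < ν x := fun x => hwlo.trans_le (hν x ▸ min_max_mem_Icc hwle _).1
  have hνsum : ∑ x, ν x = 1 := by simp only [hν]; rw [sum_min_max hwle hlow hup, hμ1]
  have hlopt_logb : ∀ x, lopt x = -Real.logb D (ν x) := by simp [hlopt, Real.log_div_log]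
  have hpow : ∀ x, D ^ (-lopt x) = ν x := fun x => by
    rw [hlopt_logb, neg_neg, Real.rpow_logb (by linarith) hD.ne' (hνpos x)]
  refine ⟨fun x => ?_, by simp only [hpow, hνsum], fun l _ hkraft => ?_⟩
  · rw [hlopt_logb, neg_nonneg]
    exact Real.logb_nonpos hD (hνpos x).le
      (hνsum ▸ single_le_sum (fun y _ => (hνpos y).le) (mem_univ x))
  · have hantitone : AntitoneOn (fun t => -Real.logb D t) (Set.Icc wlo whi) :=
      fun s hs _ _ hst => neg_le_neg (Real.logb_le_logb_of_le hD (hwlo.trans_le hs.1) hst)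
    calc _ ≤ ∑ x, lopt x * ν x := by
          simp only [hν]
          exact le_sum_mul_min_max hwle hlow hup hantitone fun x => (hν x ▸ hlopt_logb x)
      _ ≤ ∑ x, l x * ν x := by
          simp only [hlopt_logb]
          exact Real.sum_neg_logb_mul_le_sum_mul hD (fun x _ => hνpos x) (hνsum ▸ hkraft)
      _ ≤ _ := by
          simp only [hν]
          exact sum_mul_min_max_le hwle hlow hup l

/-- The waterfilling solution: the codeword lengths built from the clipped distribution
satisfy Kraft with equality and minimize the equivalent minimax pay-off. -/
theorem stmt_1 {α : Type*} [Fintype α] [Nonempty α]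
    (D : ℝ) (hD : 1 < D)
    (μ : α → ℝ) (hμpos : ∀ x, 0 < μ x) (hμ1 : ∑ x, μ x = 1)
    (R : ℝ) (hR0 : 0 < R) (hR2 : R < 2)
    (wlo whi : ℝ) (hwlo : 0 < wlo) (hwle : wlo ≤ whi)
    (hlow : ∑ x, max (wlo - μ x) 0 = R / 2)
    (hup : ∑ x, max (μ x - whi) 0 = R / 2)
    (ν lopt : α → ℝ)
    (hν : ∀ x, ν x = min whi (max wlo (μ x)))
    (hlopt : ∀ x, lopt x = -(Real.log (ν x) / Real.log D)) :
    (∀ x, 0 ≤ lopt x) ∧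
    (∑ x, D ^ (-(lopt x)) = 1) ∧
    (∀ l : α → ℝ, (∀ x, 0 ≤ l x) → ∑ x, D ^ (-(l x)) ≤ 1 →
      R / 2 * (univ.sup' univ_nonempty lopt - univ.inf' univ_nonempty lopt) +
          ∑ x, lopt x * μ x ≤
        R / 2 * (univ.sup' univ_nonempty l - univ.inf' univ_nonempty l) +
          ∑ x, l x * μ x) :=
  stmt_1_general D hD μ hμ1 R wlo whi hwlo hwle hlow hup ν lopt hν hlopt
end

section
/- Let Σ be a finite nonempty set, μ a positive probability vector on Σ, and α > 0. If w̲ is a lower water level for μ and α, then the set S := {x ∈ Σ : μ(x) < w̲} is nonempty and w̲ = (∑_{x∈S} μ(x) + α)/|S|. Likewise, if w̄ is an upper water level for μ and α, then the set T := {x ∈ Σ : μ(x) > w̄} is nonempty and w̄ = (∑_{x∈T} μ(x) − α)/|T|. -/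
/-!
Only the `x` with `μ x < w` contribute to `∑ x, max (w - μ x) 0`, so on that set the water-level
equation reads `|S| w - ∑_S μ = α`; since `α > 0` the set cannot be empty.
-/

open Finset

theorem Finset.sum_filter_pos_eq_sum_max_zero {ι : Type*} (s : Finset ι) (f : ι → ℝ) :
    ∑ x ∈ s with 0 < f x, f x = ∑ x ∈ s, max (f x) 0 := by
  rw [sum_filter]
  refine sum_congr rfl fun x _ => ?_
  split_ifs with h
  · exact (max_eq_left h.le).symm
  · exact (max_eq_right (not_lt.mp h)).symm

theorem lowerWaterLevel_eq {ι : Type*} [Fintype ι] (μ : ι → ℝ) {a w : ℝ} (ha : 0 < a)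
    (hw : ∑ x, max (w - μ x) 0 = a) :
    (univ.filter fun x => μ x < w).Nonempty ∧
      w = ((∑ x ∈ univ.filter fun x => μ x < w, μ x) + a) /
        ((univ.filter fun x => μ x < w).card : ℝ) := by
  set S := univ.filter fun x => μ x < w
  have hS : ∑ x ∈ S, (w - μ x) = a := by
    simpa only [sub_pos] using (sum_filter_pos_eq_sum_max_zero univ fun x => w - μ x).trans hw
  have hne : S.Nonempty := by
    by_contra h
    rw [not_nonempty_iff_eq_empty.mp h, sum_empty] at hS
    exact ha.ne hS
  have hcard : (0 : ℝ) < S.card := by exact_mod_cast hne.card_pos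
  rw [sum_sub_distrib, sum_const, nsmul_eq_mul] at hS
  refine ⟨hne, ?_⟩
  field_simp
  linarith

theorem stmt_2_general {α : Type*} [Fintype α]
    (μ : α → ℝ)
    (a : ℝ) (ha : 0 < a) :
    (∀ wlo : ℝ, (∑ x, max (wlo - μ x) 0 = a) →
      (univ.filter fun x => μ x < wlo).Nonempty ∧
      wlo = ((∑ x ∈ univ.filter fun x => μ x < wlo, μ x) + a) /
        ((univ.filter fun x => μ x < wlo).card : ℝ)) ∧
    (∀ whi : ℝ, (∑ x, max (μ x - whi) 0 = a) →
      (univ.filter fun x => whi < μ x).Nonempty ∧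
      whi = ((∑ x ∈ univ.filter fun x => whi < μ x, μ x) - a) /
        ((univ.filter fun x => whi < μ x).card : ℝ)) := by
  refine ⟨fun w hw => lowerWaterLevel_eq μ ha hw, fun w hw => ?_⟩
  -- an upper water level of `μ` is, negated, a lower water level of `-μ`
  have hneg : ∑ x, max (-w - -μ x) 0 = a := by
    simpa only [sub_neg_eq_add, neg_add_eq_sub] using hw
  obtain ⟨hne, hlevel⟩ := lowerWaterLevel_eq (-μ) ha hneg
  simp only [Pi.neg_apply, neg_lt_neg_iff, sum_neg_distrib] at hne hlevel
  refine ⟨hne, ?_⟩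
  have hcard : ((univ.filter fun x => w < μ x).card : ℝ) ≠ 0 := by
    exact_mod_cast hne.card_pos.ne'
  rw [eq_div_iff hcard] at hlevel ⊢
  linarith

/-- Structure of the water levels: the set of probabilities strictly below the lower level
(resp. strictly above the upper level) is nonempty and the level is the corresponding
renormalized merged weight. -/
theorem stmt_2 {α : Type*} [Fintype α] [Nonempty α]
    (μ : α → ℝ) (hμpos : ∀ x, 0 < μ x) (hμ1 : ∑ x, μ x = 1)
    (a : ℝ) (ha : 0 < a) :
    (∀ wlo : ℝ, (∑ x, max (wlo - μ x) 0 = a) →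
      (univ.filter fun x => μ x < wlo).Nonempty ∧
      wlo = ((∑ x ∈ univ.filter fun x => μ x < wlo, μ x) + a) /
        ((univ.filter fun x => μ x < wlo).card : ℝ)) ∧
    (∀ whi : ℝ, (∑ x, max (μ x - whi) 0 = a) →
      (univ.filter fun x => whi < μ x).Nonempty ∧
      whi = ((∑ x ∈ univ.filter fun x => whi < μ x, μ x) - a) /
        ((univ.filter fun x => whi < μ x).card : ℝ)) :=
  stmt_2_general μ a ha
end

section
/- Let Σ be a finite nonempty set and μ a positive probability vector on Σ. Let 0 ≤ α < α′, let w̲ be a lower water level for μ and α and w̲′ a lower water level for μ and α′; let w̄ be an upper water level for μ and α and w̄′ an upper water level for μ and α′. Then w̲ ≤ w̲′ and w̄ ≥ w̄′. Consequently, if in addition w̲ ≤ w̄ and w̲′ ≤ w̄′ and ν†, ν†′ denote the corresponding clipped distributions, then for every x ∈ Σ with μ(x) < w̲ one has ν†(x) ≤ ν†′(x), and for every x ∈ Σ with μ(x) > w̄ one has ν†(x) ≥ ν†′(x). -/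
open Finset

/-! The mass poured in below a level `w`, `∑ max (w - μ x) 0`, is monotone in `w`, and the mass
cut off above it, `∑ max (μ x - w) 0`, is antitone; so a strictly larger `α` forces a strictly
higher lower level and a strictly lower upper level. A point below the lower level is clipped to
that level, and a point above the upper level to that level, which gives the comparison of the
clipped distributions. -/

section WaterLevel

variable {ι β : Type*} [AddCommGroup β] [LinearOrder β] [IsOrderedAddMonoid β]

theorem monotone_sum_max_sub_zero (s : Finset ι) (μ : ι → β) :
    Monotone fun w => ∑ x ∈ s, max (w - μ x) 0 :=
  fun _ _ h => sum_le_sum fun _ _ => max_le_max_right 0 (sub_le_sub_right h _)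

theorem antitone_sum_max_sub_zero (s : Finset ι) (μ : ι → β) :
    Antitone fun w => ∑ x ∈ s, max (μ x - w) 0 :=
  fun _ _ h => sum_le_sum fun _ _ => max_le_max_right 0 (sub_le_sub_left h _)

end WaterLevel

theorem stmt_6_general {α : Type*} [Fintype α]
    (μ : α → ℝ)
    (a a' : ℝ) (haa : a < a')
    (wlo wlo' whi whi' : ℝ)
    (hlow : ∑ x, max (wlo - μ x) 0 = a)
    (hlow' : ∑ x, max (wlo' - μ x) 0 = a')
    (hup : ∑ x, max (μ x - whi) 0 = a)
    (hup' : ∑ x, max (μ x - whi') 0 = a') :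
    wlo ≤ wlo' ∧ whi' ≤ whi ∧
    (wlo ≤ whi → wlo' ≤ whi' →
      (∀ x, μ x < wlo → min whi (max wlo (μ x)) ≤ min whi' (max wlo' (μ x))) ∧
      (∀ x, whi < μ x → min whi' (max wlo' (μ x)) ≤ min whi (max wlo (μ x)))) := by
  have hlo : wlo < wlo' :=
    (monotone_sum_max_sub_zero univ μ).reflect_lt (hlow.trans_lt (haa.trans_eq hlow'.symm))
  have hhi : whi' < whi :=
    (antitone_sum_max_sub_zero univ μ).reflect_lt (hup.trans_lt (haa.trans_eq hup'.symm))
  refine ⟨hlo.le, hhi.le, fun hw hw' => ⟨fun x hx => ?_, fun x hx => ?_⟩⟩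
  · rw [max_eq_left hx.le, min_eq_right hw, max_eq_left (hx.trans hlo).le, min_eq_right hw']
    exact hlo.le
  · rw [max_eq_right (hw.trans hx.le), min_eq_left hx.le,
      max_eq_right ((hw'.trans_lt hhi).trans hx).le, min_eq_left (hhi.trans hx).le]
    exact hhi.le

/-- Monotonicity of the water levels in `α`: the lower level increases, the upper level
decreases; consequently merged low weights increase and merged high weights decrease. -/
theorem stmt_6 {α : Type*} [Fintype α] [Nonempty α]
    (μ : α → ℝ) (hμpos : ∀ x, 0 < μ x) (hμ1 : ∑ x, μ x = 1)
    (a a' : ℝ) (ha : 0 ≤ a) (haa : a < a')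
    (wlo wlo' whi whi' : ℝ)
    (hlow : ∑ x, max (wlo - μ x) 0 = a)
    (hlow' : ∑ x, max (wlo' - μ x) 0 = a')
    (hup : ∑ x, max (μ x - whi) 0 = a)
    (hup' : ∑ x, max (μ x - whi') 0 = a') :
    wlo ≤ wlo' ∧ whi' ≤ whi ∧
    (wlo ≤ whi → wlo' ≤ whi' →
      (∀ x, μ x < wlo → min whi (max wlo (μ x)) ≤ min whi' (max wlo' (μ x))) ∧
      (∀ x, whi < μ x → min whi' (max wlo' (μ x)) ≤ min whi (max wlo (μ x)))) :=
  stmt_6_general μ a a' haa wlo wlo' whi whi' hlow hlow' hup hup'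
end

section
/- Let Σ be a finite nonempty set and μ a positive probability vector on Σ. Let 0 < α ≤ α′, let w̲ ≤ w̄ be a lower and an upper water level for μ and α, and let w̲′ ≤ w̄′ be a lower and an upper water level for μ and α′; let ν† and ν†′ denote the corresponding clipped distributions. If x, y ∈ Σ satisfy μ(x) < w̲ and μ(y) < w̲ (so that ν†(x) = ν†(y) = w̲, i.e., the weights of x and y are merged at the minimum level at α), then also ν†′(x) = ν†′(y) = w̲′; in other words, once two symbols' weights merge at the minimum level they remain merged for every larger value of α. -/
/-!
The map `w ↦ ∑ max (w - μ z) 0` is monotone, and strictly so below any `w` exceeding some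
`μ z`. Since `μ x < w̲` and the map takes the value `α ≤ α′` at `w̲` and `α′` at `w̲′`, this
forces `w̲ ≤ w̲′`; hence `μ x, μ y < w̲′ ≤ w̄′` and both are clipped to `w̲′`.
-/

open Finset

theorem sum_max_sub_lt_sum_max_sub {ι : Type*} {s : Finset ι} (μ : ι → ℝ) {w w' : ℝ}
    (hww' : w' < w) {x : ι} (hxs : x ∈ s) (hx : μ x < w) :
    ∑ i ∈ s, max (w' - μ i) 0 < ∑ i ∈ s, max (w - μ i) 0 := by
  refine sum_lt_sum (fun i _ => max_le_max (by linarith) le_rfl) ⟨x, hxs, ?_⟩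
  rw [max_eq_left (by linarith : (0 : ℝ) ≤ w - μ x)]
  exact max_lt (by linarith) (by linarith)

theorem le_of_sum_max_sub_le {ι : Type*} {s : Finset ι} (μ : ι → ℝ) {w w' : ℝ}
    (hsum : ∑ i ∈ s, max (w - μ i) 0 ≤ ∑ i ∈ s, max (w' - μ i) 0)
    {x : ι} (hxs : x ∈ s) (hx : μ x < w) : w ≤ w' := by
  by_contra! hlt
  exact (sum_max_sub_lt_sum_max_sub μ hlt hxs hx).not_ge hsum

theorem min_max_eq_of_le {lo hi v : ℝ} (hv : v ≤ lo) (hlo : lo ≤ hi) :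
    min hi (max lo v) = lo := by
  rw [max_eq_left hv, min_eq_right hlo]

theorem stmt_7_general {α : Type*} [Fintype α]
    (μ : α → ℝ) (a a' : ℝ) (haa : a ≤ a') (wlo : ℝ)
    (hlow : ∑ x, max (wlo - μ x) 0 = a)
    (wlo' whi' : ℝ) (hw' : wlo' ≤ whi')
    (hlow' : ∑ x, max (wlo' - μ x) 0 = a')
    (x y : α) (hx : μ x < wlo) (hy : μ y < wlo) :
    min whi' (max wlo' (μ x)) = wlo' ∧ min whi' (max wlo' (μ y)) = wlo' := by
  have hle : wlo ≤ wlo' :=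
    le_of_sum_max_sub_le μ (by rw [hlow, hlow']; exact haa) (mem_univ x) hx
  exact ⟨min_max_eq_of_le (by linarith) hw', min_max_eq_of_le (by linarith) hw'⟩

/-- Once two symbols' weights merge at the minimum level they remain merged for every
larger value of `α`. -/
theorem stmt_7 {α : Type*} [Fintype α] [Nonempty α]
    (μ : α → ℝ) (hμpos : ∀ x, 0 < μ x) (hμ1 : ∑ x, μ x = 1)
    (a a' : ℝ) (ha : 0 < a) (haa : a ≤ a')
    (wlo whi : ℝ) (hw : wlo ≤ whi)
    (hlow : ∑ x, max (wlo - μ x) 0 = a)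
    (hup : ∑ x, max (μ x - whi) 0 = a)
    (wlo' whi' : ℝ) (hw' : wlo' ≤ whi')
    (hlow' : ∑ x, max (wlo' - μ x) 0 = a')
    (hup' : ∑ x, max (μ x - whi') 0 = a')
    (x y : α) (hx : μ x < wlo) (hy : μ y < wlo) :
    min whi' (max wlo' (μ x)) = wlo' ∧ min whi' (max wlo' (μ y)) = wlo' :=
  stmt_7_general μ a a' haa wlo hlow wlo' whi' hw' hlow' x y hx hy
end

section
/- Let Σ be a finite nonempty set, μ a probability vector on Σ, l : Σ → ℝ a function with l(x) ≥ 0 for all x, and R ∈ [0,2]. Suppose x⁰ ∈ Σ attains the maximum of l over Σ, x₀ ∈ Σ attains the minimum of l over Σ, x⁰ ≠ x₀, R/2 ≤ μ(x₀), and μ(x⁰) + R/2 ≤ 1. Define ν†(x) := μ(x) + (R/2)·(𝟙[x = x⁰] − 𝟙[x = x₀]). Then ν† is a probability vector on Σ, ‖ν† − μ‖_TV = R, and ∑_{x∈Σ} l(x)ν†(x) = (R/2)(max_{x∈Σ} l(x) − min_{x∈Σ} l(x)) + ∑_{x∈Σ} l(x)μ(x). -/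
open Finset

def unitTransfer {α R : Type*} [DecidableEq α] [Ring R] (a b : α) (x : α) : R :=
  (if x = a then 1 else 0) - (if x = b then 1 else 0)

theorem unitTransfer_right {α R : Type*} [DecidableEq α] [Ring R] {a b : α} (hab : a ≠ b) :
    (unitTransfer a b b : R) = -1 := by
  simp [unitTransfer, hab.symm]

theorem unitTransfer_nonneg_of_ne_right {α R : Type*} [DecidableEq α] [Ring R] [PartialOrder R]
    [IsOrderedRing R] {a b x : α} (hxb : x ≠ b) : 0 ≤ (unitTransfer a b x : R) := by
  unfold unitTransfer
  split_ifs <;> simp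

theorem abs_unitTransfer {α R : Type*} [DecidableEq α] [Ring R] [LinearOrder R] [IsOrderedRing R]
    {a b : α} (hab : a ≠ b) (x : α) :
    |(unitTransfer a b x : R)| = (if x = a then 1 else 0) + (if x = b then 1 else 0) := by
  unfold unitTransfer
  by_cases ha : x = a
  · subst ha; simp [hab]
  · by_cases hb : x = b
    · subst hb; simp [hab.symm]
    · simp [ha, hb]

section UnitTransfer

variable {α : Type*} [Fintype α] [DecidableEq α]

theorem sum_mul_unitTransfer {R : Type*} [Ring R] (f : α → R) (a b : α) :
    ∑ x, f x * unitTransfer a b x = f a - f b := by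
  simp only [unitTransfer, mul_sub, mul_ite, mul_one, mul_zero, sum_sub_distrib,
    sum_ite_eq', mem_univ, if_true]

theorem sum_unitTransfer {R : Type*} [Ring R] (a b : α) :
    ∑ x, (unitTransfer a b x : R) = 0 := by
  simpa using sum_mul_unitTransfer (fun _ => (1 : R)) a b

theorem sum_abs_unitTransfer {R : Type*} [Ring R] [LinearOrder R] [IsOrderedRing R]
    {a b : α} (hab : a ≠ b) : ∑ x, |(unitTransfer a b x : R)| = 2 := by
  simp only [abs_unitTransfer hab, sum_add_distrib, sum_ite_eq', mem_univ, if_true]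
  norm_num

end UnitTransfer

theorem stmt_9_general {α : Type*} [Fintype α] [Nonempty α] [DecidableEq α]
    (μ : α → ℝ) (hμ0 : ∀ x, 0 ≤ μ x) (hμ1 : ∑ x, μ x = 1)
    (l : α → ℝ)
    (R : ℝ) (hR0 : 0 ≤ R)
    (x0 xm : α)
    (hx0 : l x0 = univ.sup' univ_nonempty l)
    (hxm : l xm = univ.inf' univ_nonempty l)
    (hne : x0 ≠ xm)
    (hRμ : R / 2 ≤ μ xm)
    (ν : α → ℝ)
    (hν : ∀ x, ν x = μ x +
      R / 2 * ((if x = x0 then (1 : ℝ) else 0) - (if x = xm then (1 : ℝ) else 0))) :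
    (∀ x, 0 ≤ ν x) ∧ (∑ x, ν x = 1) ∧ (∑ x, |ν x - μ x| = R) ∧
    (∑ x, l x * ν x =
      R / 2 * (univ.sup' univ_nonempty l - univ.inf' univ_nonempty l) + ∑ x, l x * μ x) := by
  obtain rfl : ν = fun x => μ x + R / 2 * unitTransfer x0 xm x := funext hν
  refine ⟨fun x => ?_, ?_, ?_, ?_⟩
  · by_cases hx : x = xm
    · subst hx
      simp only [unitTransfer_right hne]
      linarith
    · exact add_nonneg (hμ0 x) (mul_nonneg (by positivity) (unitTransfer_nonneg_of_ne_right hx))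
  · simp [sum_add_distrib, ← mul_sum, sum_unitTransfer, hμ1]
  · simp only [add_sub_cancel_left, abs_mul, ← mul_sum, sum_abs_unitTransfer hne,
      abs_of_nonneg (div_nonneg hR0 zero_le_two)]
    ring
  · simp only [mul_add, sum_add_distrib, mul_left_comm (l _), ← mul_sum,
      sum_mul_unitTransfer, hx0, hxm]
    ring

/-- The explicit maximizing distribution obtained by moving mass `R/2` from the symbol of
minimal length to the symbol of maximal length. -/
theorem stmt_9 {α : Type*} [Fintype α] [Nonempty α] [DecidableEq α]
    (μ : α → ℝ) (hμ0 : ∀ x, 0 ≤ μ x) (hμ1 : ∑ x, μ x = 1)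
    (l : α → ℝ) (hl : ∀ x, 0 ≤ l x)
    (R : ℝ) (hR0 : 0 ≤ R) (hR2 : R ≤ 2)
    (x0 xm : α)
    (hx0 : l x0 = univ.sup' univ_nonempty l)
    (hxm : l xm = univ.inf' univ_nonempty l)
    (hne : x0 ≠ xm)
    (hRμ : R / 2 ≤ μ xm) (hRμ' : μ x0 + R / 2 ≤ 1)
    (ν : α → ℝ)
    (hν : ∀ x, ν x = μ x +
      R / 2 * ((if x = x0 then (1 : ℝ) else 0) - (if x = xm then (1 : ℝ) else 0))) :
    (∀ x, 0 ≤ ν x) ∧ (∑ x, ν x = 1) ∧ (∑ x, |ν x - μ x| = R) ∧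
    (∑ x, l x * ν x =
      R / 2 * (univ.sup' univ_nonempty l - univ.inf' univ_nonempty l) + ∑ x, l x * μ x) :=
  stmt_9_general μ hμ0 hμ1 l R hR0 x0 xm hx0 hxm hne hRμ ν hν
end

section
/- Let Σ be a finite nonempty set, μ a positive probability vector on Σ, R ∈ [0,2], and α := R/2. Suppose 0 ≤ w̲ ≤ w̄ are a lower water level and an upper water level for μ and α, respectively, and let ν† be the clipped distribution ν†(x) := min(w̄, max(w̲, μ(x))). Then ν†(x) ≥ 0 for all x, ∑_{x∈Σ} ν†(x) = 1, and ‖ν† − μ‖_TV = R. -/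
/-! Clipping changes `μ x` by its deficit below `w̲` minus its excess above `w̄`, and at most one
of the two is nonzero. Summing, the water-level equations give total change `α - α = 0` and
total absolute change `α + α = R`. -/

open Finset

section Clip

variable {G : Type*} [AddCommGroup G] [LinearOrder G] [IsOrderedAddMonoid G] {a b : G}

theorem min_max_sub_self (hab : a ≤ b) (t : G) :
    min b (max a t) - t = max (a - t) 0 - max (t - b) 0 := by
  rcases le_total t a with hta | hat
  · have htb : t ≤ b := hta.trans hab
    simp [hta, hab, sub_nonneg.2 hta, sub_nonpos.2 htb]
  · rcases le_total t b with htb | hbt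
    · simp [hat, htb, sub_nonpos.2 hat, sub_nonpos.2 htb]
    · simp [hat, hbt, sub_nonpos.2 (hab.trans hbt), sub_nonneg.2 hbt]

theorem abs_min_max_sub_self (hab : a ≤ b) (t : G) :
    |min b (max a t) - t| = max (a - t) 0 + max (t - b) 0 := by
  rw [min_max_sub_self hab]
  rcases le_total t a with hta | hat
  · simp [sub_nonpos.2 (hta.trans hab)]
  · simp [sub_nonpos.2 hat]

variable {ι : Type*} (s : Finset ι) (μ : ι → G)

theorem sum_min_max_sub_self (hab : a ≤ b) :
    ∑ x ∈ s, (min b (max a (μ x)) - μ x) =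
      ∑ x ∈ s, max (a - μ x) 0 - ∑ x ∈ s, max (μ x - b) 0 := by
  simp only [min_max_sub_self hab, sum_sub_distrib]

theorem sum_abs_min_max_sub_self (hab : a ≤ b) :
    ∑ x ∈ s, |min b (max a (μ x)) - μ x| =
      ∑ x ∈ s, max (a - μ x) 0 + ∑ x ∈ s, max (μ x - b) 0 := by
  simp only [abs_min_max_sub_self hab, sum_add_distrib]

end Clip

theorem stmt_12_general {α : Type*} [Fintype α]
    (μ : α → ℝ) (hμ1 : ∑ x, μ x = 1)
    (R : ℝ)
    (wlo whi : ℝ) (hwlo : 0 ≤ wlo) (hwle : wlo ≤ whi)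
    (hlow : ∑ x, max (wlo - μ x) 0 = R / 2)
    (hup : ∑ x, max (μ x - whi) 0 = R / 2)
    (ν : α → ℝ) (hν : ∀ x, ν x = min whi (max wlo (μ x))) :
    (∀ x, 0 ≤ ν x) ∧ (∑ x, ν x = 1) ∧ (∑ x, |ν x - μ x| = R) := by
  obtain rfl : ν = fun x => min whi (max wlo (μ x)) := funext hν
  refine ⟨fun x => le_min (hwlo.trans hwle) (hwlo.trans (le_max_left _ _)), ?_, ?_⟩
  · have hsum := sum_min_max_sub_self univ μ hwle
    rw [hlow, hup, sub_self, sum_sub_distrib, hμ1, sub_eq_zero] at hsum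
    exact hsum
  · rw [sum_abs_min_max_sub_self univ μ hwle, hlow, hup, add_halves]

/-- The clipped distribution is a probability vector lying on the boundary of the total
variational ball of radius `R`. -/
theorem stmt_12 {α : Type*} [Fintype α] [Nonempty α]
    (μ : α → ℝ) (hμpos : ∀ x, 0 < μ x) (hμ1 : ∑ x, μ x = 1)
    (R : ℝ) (hR0 : 0 ≤ R) (hR2 : R ≤ 2)
    (wlo whi : ℝ) (hwlo : 0 ≤ wlo) (hwle : wlo ≤ whi)
    (hlow : ∑ x, max (wlo - μ x) 0 = R / 2)
    (hup : ∑ x, max (μ x - whi) 0 = R / 2)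
    (ν : α → ℝ) (hν : ∀ x, ν x = min whi (max wlo (μ x))) :
    (∀ x, 0 ≤ ν x) ∧ (∑ x, ν x = 1) ∧ (∑ x, |ν x - μ x| = R) :=
  stmt_12_general μ hμ1 R wlo whi hwlo hwle hlow hup ν hν
end

section
/- Fix a real number D > 1, let Σ be a finite nonempty set, μ a positive probability vector on Σ, R ∈ (0,2), and α := R/2. Suppose 0 < w̲ ≤ w̄ are a lower water level and an upper water level for μ and α, respectively, and let ν† be the clipped distribution. Then the minimum over all length functions l : Σ → ℝ with l(x) ≥ 0 for all x and ∑_{x∈Σ} D^{−l(x)} ≤ 1 of the pay-off G_R(l) := (R/2)(max_{x∈Σ} l(x) − min_{x∈Σ} l(x)) + ∑_{x∈Σ} l(x)μ(x) equals the D-ary entropy of ν†, namely −∑_{x∈Σ} ν†(x) log_D ν†(x), and this minimum is attained at l†(x) := −log_D ν†(x). -/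
open Finset Real

/-!
Write `a x = (w̲ - μ x)⁺` and `b x = (μ x - w̄)⁺`, so that `ν† - μ = a - b` with `∑ a = ∑ b = R/2`;
in particular `ν†` is a probability vector. For every `l`,
`∑ ν† l - ∑ μ l = ∑ a l - ∑ b l ≤ (R/2) (max l - min l)`, so the pay-off dominates the
`ν†`-average of `l`, which by Gibbs' inequality dominates the entropy of `ν†` when `l` satisfies
Kraft's inequality. For `l† = -log_D ν†` both inequalities are equalities: `l†` is a decreasing
function of `ν†`, which equals `w̲` where `a > 0` and `w̄` where `b > 0`, so there `l†` takes its
extreme values.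
-/

lemma min_max_sub_self_s13 {lo hi : ℝ} (hle : lo ≤ hi) (t : ℝ) :
    min hi (max lo t) - t = max (lo - t) 0 - max (t - hi) 0 := by
  simp only [max_def, min_def]
  split_ifs <;> linarith

lemma max_sub_mul_apply_min_max_of_lower {lo hi : ℝ} (hle : lo ≤ hi) (f : ℝ → ℝ) (t : ℝ) :
    max (lo - t) 0 * f (min hi (max lo t)) = max (lo - t) 0 * f lo := by
  rcases le_total t lo with h | h
  · rw [max_eq_left h, min_eq_right hle]
  · rw [max_eq_right (sub_nonpos.2 h), zero_mul, zero_mul]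

lemma max_sub_mul_apply_min_max_of_upper {lo hi : ℝ} (hle : lo ≤ hi) (f : ℝ → ℝ) (t : ℝ) :
    max (t - hi) 0 * f (min hi (max lo t)) = max (t - hi) 0 * f hi := by
  rcases le_total hi t with h | h
  · rw [max_eq_right (hle.trans h), min_eq_left h]
  · rw [max_eq_right (sub_nonpos.2 h), zero_mul, zero_mul]

section Clipping

variable {ι : Type*} [Fintype ι] {μ ν : ι → ℝ} {wlo whi s : ℝ}

lemma sum_mul_clip_sub_sum_mul (hle : wlo ≤ whi) (hν : ∀ x, ν x = min whi (max wlo (μ x)))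
    (l : ι → ℝ) :
    ∑ x, ν x * l x - ∑ x, l x * μ x =
      ∑ x, max (wlo - μ x) 0 * l x - ∑ x, max (μ x - whi) 0 * l x := by
  rw [← sum_sub_distrib, ← sum_sub_distrib]
  refine sum_congr rfl fun x _ => ?_
  rw [← sub_mul, ← min_max_sub_self_s13 hle, hν]
  ring

variable (hle : wlo ≤ whi) (hlow : ∑ x, max (wlo - μ x) 0 = s)
  (hup : ∑ x, max (μ x - whi) 0 = s) (hν : ∀ x, ν x = min whi (max wlo (μ x)))
include hle hlow hup hν

lemma sum_clip_eq_sum : ∑ x, ν x = ∑ x, μ x := by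
  have h := sum_mul_clip_sub_sum_mul hle hν 1
  simp only [Pi.one_apply, mul_one, one_mul, hlow, hup, sub_self] at h
  linarith

variable [Nonempty ι]

lemma sum_clip_mul_le (l : ι → ℝ) :
    ∑ x, ν x * l x ≤
      s * (univ.sup' univ_nonempty l - univ.inf' univ_nonempty l) + ∑ x, l x * μ x := by
  have hsup : ∑ x, max (wlo - μ x) 0 * l x ≤ s * univ.sup' univ_nonempty l := by
    rw [← hlow, sum_mul]
    exact sum_le_sum fun x hx => mul_le_mul_of_nonneg_left (le_sup' l hx) (le_max_right _ _)
  have hinf : s * univ.inf' univ_nonempty l ≤ ∑ x, max (μ x - whi) 0 * l x := by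
    rw [← hup, sum_mul]
    exact sum_le_sum fun x hx => mul_le_mul_of_nonneg_left (inf'_le l hx) (le_max_right _ _)
  linarith [sum_mul_clip_sub_sum_mul hle hν l]

lemma le_sum_clip_mul_of_antitoneOn {f : ℝ → ℝ} (hf : AntitoneOn f (Set.Icc wlo whi))
    {l : ι → ℝ} (hl : ∀ x, l x = f (ν x)) :
    s * (univ.sup' univ_nonempty l - univ.inf' univ_nonempty l) + ∑ x, l x * μ x ≤
      ∑ x, ν x * l x := by
  have hνmem : ∀ x, ν x ∈ Set.Icc wlo whi := fun x =>
    hν x ▸ ⟨le_min hle (le_max_left _ _), min_le_left _ _⟩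
  have hlo : wlo ∈ Set.Icc wlo whi := ⟨le_rfl, hle⟩
  have hhi : whi ∈ Set.Icc wlo whi := ⟨hle, le_rfl⟩
  have hsup : univ.sup' univ_nonempty l ≤ f wlo :=
    sup'_le _ _ fun x _ => hl x ▸ hf hlo (hνmem x) (hνmem x).1
  have hinf : f whi ≤ univ.inf' univ_nonempty l :=
    le_inf' _ _ fun x _ => hl x ▸ hf (hνmem x) hhi (hνmem x).2
  have hs : 0 ≤ s := hlow ▸ sum_nonneg fun x _ => le_max_right _ _
  have hsum_lo : ∑ x, max (wlo - μ x) 0 * l x = s * f wlo := by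
    rw [← hlow, sum_mul]
    exact sum_congr rfl fun x _ => by rw [hl, hν, max_sub_mul_apply_min_max_of_lower hle]
  have hsum_hi : ∑ x, max (μ x - whi) 0 * l x = s * f whi := by
    rw [← hup, sum_mul]
    exact sum_congr rfl fun x _ => by rw [hl, hν, max_sub_mul_apply_min_max_of_upper hle]
  have hgap := mul_le_mul_of_nonneg_left (sub_le_sub hsup hinf) hs
  linarith [sum_mul_clip_sub_sum_mul hle hν l]

end Clipping

section Gibbs

variable {ι : Type*} [Fintype ι]

lemma sum_mul_log_div_le {p q : ι → ℝ} (hp : ∀ x, 0 < p x) (hq : ∀ x, 0 < q x) :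
    ∑ x, p x * log (q x / p x) ≤ ∑ x, q x - ∑ x, p x := by
  rw [← sum_sub_distrib]
  refine sum_le_sum fun x _ => ?_
  calc p x * log (q x / p x) ≤ p x * (q x / p x - 1) :=
        mul_le_mul_of_nonneg_left (log_le_sub_one_of_pos (div_pos (hq x) (hp x))) (hp x).le
    _ = q x - p x := by field_simp [(hp x).ne']

lemma neg_sum_mul_logb_le_of_kraft {D : ℝ} (hD : 1 < D) {p l : ι → ℝ} (hp : ∀ x, 0 < p x)
    (hp1 : ∑ x, p x = 1) (hl : ∑ x, D ^ (-l x) ≤ 1) :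
    -∑ x, p x * logb D (p x) ≤ ∑ x, p x * l x := by
  have hD0 : 0 < D := zero_lt_one.trans hD
  have hlogD : 0 < log D := log_pos hD
  have hgibbs := sum_mul_log_div_le hp fun x => rpow_pos_of_pos hD0 (-l x)
  have hterm : ∀ x, p x * log (D ^ (-l x) / p x) =
      log D * (p x * (-logb D (p x) - l x)) := fun x => by
    rw [log_div (rpow_pos_of_pos hD0 _).ne' (hp x).ne', log_rpow hD0, logb]
    field_simp
    ring
  simp only [hterm, ← mul_sum, hp1] at hgibbs
  have hneg : ∑ x, p x * (-logb D (p x) - l x) ≤ 0 :=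
    nonpos_of_mul_nonpos_right (by linarith) hlogD
  simp only [mul_sub, mul_neg, sum_sub_distrib, sum_neg_distrib] at hneg
  linarith

end Gibbs

theorem stmt_13_general {α : Type*} [Fintype α] [Nonempty α]
    (D : ℝ) (hD : 1 < D)
    (μ : α → ℝ) (hμ1 : ∑ x, μ x = 1)
    (R : ℝ)
    (wlo whi : ℝ) (hwlo : 0 < wlo) (hwle : wlo ≤ whi)
    (hlow : ∑ x, max (wlo - μ x) 0 = R / 2)
    (hup : ∑ x, max (μ x - whi) 0 = R / 2)
    (ν lopt : α → ℝ)
    (hν : ∀ x, ν x = min whi (max wlo (μ x)))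
    (hlopt : ∀ x, lopt x = -(Real.log (ν x) / Real.log D)) :
    (∀ x, 0 ≤ lopt x) ∧
    (∑ x, D ^ (-(lopt x)) ≤ 1) ∧
    (R / 2 * (univ.sup' univ_nonempty lopt - univ.inf' univ_nonempty lopt) +
        ∑ x, lopt x * μ x = -∑ x, ν x * (Real.log (ν x) / Real.log D)) ∧
    (∀ l : α → ℝ, (∀ x, 0 ≤ l x) → ∑ x, D ^ (-(l x)) ≤ 1 →
      R / 2 * (univ.sup' univ_nonempty lopt - univ.inf' univ_nonempty lopt) +
          ∑ x, lopt x * μ x ≤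
        R / 2 * (univ.sup' univ_nonempty l - univ.inf' univ_nonempty l) +
          ∑ x, l x * μ x) := by
  have hlopt' : ∀ x, lopt x = -logb D (ν x) := hlopt
  have hνpos : ∀ x, 0 < ν x := fun x =>
    hν x ▸ lt_min (hwlo.trans_le hwle) (lt_max_of_lt_left hwlo)
  have hν1 : ∑ x, ν x = 1 := (sum_clip_eq_sum hwle hlow hup hν).trans hμ1
  have hνle1 : ∀ x, ν x ≤ 1 := fun x =>
    hν1 ▸ single_le_sum (fun y _ => (hνpos y).le) (mem_univ x)
  have hpayoff : R / 2 * (univ.sup' univ_nonempty lopt - univ.inf' univ_nonempty lopt) +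
      ∑ x, lopt x * μ x = ∑ x, ν x * lopt x :=
    le_antisymm
      (le_sum_clip_mul_of_antitoneOn hwle hlow hup hν
        (fun _ ha _ _ hab => neg_le_neg (logb_le_logb_of_le hD (hwlo.trans_le ha.1) hab)) hlopt')
      (sum_clip_mul_le hwle hlow hup hν lopt)
  have hentropy : ∑ x, ν x * lopt x = -∑ x, ν x * logb D (ν x) := by
    simp only [hlopt', mul_neg, sum_neg_distrib]
  refine ⟨fun x => ?_, ?_, hpayoff.trans hentropy, fun l _ hl => ?_⟩
  · rw [hlopt', neg_nonneg]
    exact logb_nonpos hD (hνpos x).le (hνle1 x)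
  · simp only [hlopt', neg_neg, rpow_logb (zero_lt_one.trans hD) hD.ne' (hνpos _), hν1, le_refl]
  · rw [hpayoff, hentropy]
    exact (neg_sum_mul_logb_le_of_kraft hD hνpos hν1 hl).trans
      (sum_clip_mul_le hwle hlow hup hν l)

/-- The minimum of the minimax pay-off over Kraft-feasible length functions equals the
`D`-ary entropy of the clipped distribution and is attained at `l† = -log_D ν†`. -/
theorem stmt_13 {α : Type*} [Fintype α] [Nonempty α]
    (D : ℝ) (hD : 1 < D)
    (μ : α → ℝ) (hμpos : ∀ x, 0 < μ x) (hμ1 : ∑ x, μ x = 1)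
    (R : ℝ) (hR0 : 0 < R) (hR2 : R < 2)
    (wlo whi : ℝ) (hwlo : 0 < wlo) (hwle : wlo ≤ whi)
    (hlow : ∑ x, max (wlo - μ x) 0 = R / 2)
    (hup : ∑ x, max (μ x - whi) 0 = R / 2)
    (ν lopt : α → ℝ)
    (hν : ∀ x, ν x = min whi (max wlo (μ x)))
    (hlopt : ∀ x, lopt x = -(Real.log (ν x) / Real.log D)) :
    (∀ x, 0 ≤ lopt x) ∧
    (∑ x, D ^ (-(lopt x)) ≤ 1) ∧
    (R / 2 * (univ.sup' univ_nonempty lopt - univ.inf' univ_nonempty lopt) +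
        ∑ x, lopt x * μ x = -∑ x, ν x * (Real.log (ν x) / Real.log D)) ∧
    (∀ l : α → ℝ, (∀ x, 0 ≤ l x) → ∑ x, D ^ (-(l x)) ≤ 1 →
      R / 2 * (univ.sup' univ_nonempty lopt - univ.inf' univ_nonempty lopt) +
          ∑ x, lopt x * μ x ≤
        R / 2 * (univ.sup' univ_nonempty l - univ.inf' univ_nonempty l) +
          ∑ x, l x * μ x) :=
  stmt_13_general D hD μ hμ1 R wlo whi hwlo hwle hlow hup ν lopt hν hlopt
end
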